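/- arXiv:1411.2071 — 2 statements merged into one kernel-verified Lean document; each statement's English description precedes it below -/
import Mathlib

section
/- Let E be the elliptic curve y² + y = x³ − x² − 10x − 20 (the curve X₀(11)). For every prime p ≠ 11 with p not congruent to 1 or 4 modulo 5 (i.e., p inert or ramified in ℚ(√5)), one has #E(F_p) ≠ p + 1; that is, no such prime is supersingular in the sense of having trace of Frobenius zero. -/
/-! The point `P = (5, 5)` of `X₀(11)` has order `5` over every field in which `11` is invertible:
doubling twice gives `2P = (16, -61)` and `4P = (5, -6) = -P`. By Lagrange, `5 ∣ #E(𝔽_p)`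
for `p ≠ 11`, so `#E(𝔽_p) = p + 1` would force `p ≡ 4 [MOD 5]`. -/

open WeierstrassCurve WeierstrassCurve.Affine

namespace WeierstrassCurve.Affine

lemma natCard_point {R : Type*} [CommRing R] [Nontrivial R] [Finite R] (W : Affine R)
    [W.IsElliptic] :
    Nat.card W.Point = Nat.card {xy : R × R // W.Equation xy.1 xy.2} + 1 := by
  rw [Nat.card_congr W.pointEquiv, WithZero, Finite.card_option]

variable {F : Type*} [Field F] [DecidableEq F] {W : Affine F}

lemma Point.two_nsmul_some_of_slope {x y ℓ x' y' : F} {h : W.Nonsingular x y}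
    {h' : W.Nonsingular x' y'} (hy : y ≠ W.negY x y)
    (hℓ : ℓ * (y - W.negY x y) = 3 * x ^ 2 + 2 * W.a₂ * x + W.a₄ - W.a₁ * y)
    (hx' : W.addX x x ℓ = x') (hy' : W.addY x x y ℓ = y') :
    2 • some x y h = some x' y' h' := by
  have hslope : W.slope x x y y = ℓ := by
    rw [slope_of_Y_ne rfl hy, div_eq_iff (sub_ne_zero.mpr hy), hℓ]
  rw [two_nsmul, add_self_of_Y_ne hy, Point.some.injEq, hslope]
  exact ⟨hx', hy'⟩

end WeierstrassCurve.Affine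

def X₀eleven (R : Type*) [CommRing R] : WeierstrassCurve R := ⟨0, -1, 1, -10, -20⟩

namespace X₀eleven

section CommRing

variable {R : Type*} [CommRing R]

lemma Δ_eq : (X₀eleven R).Δ = -11 ^ 5 := by
  simp only [X₀eleven, Δ, b₂, b₄, b₆, b₈]
  ring

lemma isElliptic_iff : (X₀eleven R).IsElliptic ↔ IsUnit (11 : R) := by
  rw [WeierstrassCurve.isElliptic_iff, Δ_eq, IsUnit.neg_iff, isUnit_pow_iff (by norm_num)]

lemma equation_iff (x y : R) :
    (X₀eleven R).toAffine.Equation x y ↔ y ^ 2 + y = x ^ 3 - x ^ 2 - 10 * x - 20 := by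
  rw [Affine.equation_iff]
  simp only [X₀eleven]
  constructor <;> intro h <;> linear_combination h

lemma natCard_point [Nontrivial R] [Finite R] [(X₀eleven R).IsElliptic] :
    Nat.card (X₀eleven R).toAffine.Point =
      1 + Nat.card {xy : R × R // xy.2 ^ 2 + xy.2 = xy.1 ^ 3 - xy.1 ^ 2 - 10 * xy.1 - 20} := by
  rw [Affine.natCard_point, add_comm,
    Nat.card_congr (Equiv.subtypeEquivRight fun xy : R × R => equation_iff xy.1 xy.2)]

end CommRing

section Field

variable {F : Type*} [Field F] [(X₀eleven F).IsElliptic]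

lemma eleven_ne_zero : (11 : F) ≠ 0 :=
  (isElliptic_iff.mp inferInstance).ne_zero

variable [DecidableEq F]

noncomputable def torsionPoint : (X₀eleven F).toAffine.Point :=
  .mk ((equation_iff (5 : F) 5).mpr (by norm_num))

lemma two_nsmul_torsionPoint : 2 • (torsionPoint : (X₀eleven F).toAffine.Point) =
    .mk ((equation_iff (16 : F) (-61)).mpr (by norm_num)) := by
  unfold torsionPoint Point.mk
  refine Point.two_nsmul_some_of_slope (ℓ := 5) ?_ ?_ ?_ ?_ <;>
    simp only [X₀eleven, negY, addX, addY, negAddY]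
  · intro h
    exact eleven_ne_zero (by linear_combination h)
  all_goals ring

lemma four_nsmul_torsionPoint :
    4 • (torsionPoint : (X₀eleven F).toAffine.Point) = -torsionPoint := by
  rw [show 4 = 2 * 2 by rfl, mul_nsmul, two_nsmul_torsionPoint]
  unfold torsionPoint Point.mk
  refine Point.two_nsmul_some_of_slope (ℓ := -6) ?_ ?_ ?_ ?_ <;>
    simp only [X₀eleven, negY, addX, addY, negAddY]
  · intro h
    exact pow_ne_zero 2 (eleven_ne_zero (F := F)) (by linear_combination -h)
  all_goals ring

lemma addOrderOf_torsionPoint : addOrderOf (torsionPoint : (X₀eleven F).toAffine.Point) = 5 := by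
  have : Fact (Nat.Prime 5) := ⟨by norm_num⟩
  refine addOrderOf_eq_prime ?_ (by unfold torsionPoint Point.mk; exact Point.some_ne_zero _)
  rw [succ_nsmul, four_nsmul_torsionPoint, neg_add_cancel]

end Field

lemma isElliptic_zmod {p : ℕ} [Fact p.Prime] (hp : p ≠ 11) : (X₀eleven (ZMod p)).IsElliptic := by
  refine isElliptic_iff.mpr (Ne.isUnit fun h => hp ?_)
  rw [← Nat.cast_ofNat, ZMod.natCast_eq_zero_iff] at h
  exact (Nat.prime_dvd_prime_iff_eq Fact.out (by norm_num)).mp h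

end X₀eleven

theorem stmt11_general (p : ℕ) [Fact p.Prime] (hp : p ≠ 11)
    (h4 : p % 5 ≠ 4) :
    (1 + Nat.card {pt : ZMod p × ZMod p //
      pt.2 ^ 2 + pt.2 = pt.1 ^ 3 - pt.1 ^ 2 - 10 * pt.1 - 20}) ≠ p + 1 := by
  have := X₀eleven.isElliptic_zmod hp
  have h5 : 5 ∣ 1 + Nat.card {pt : ZMod p × ZMod p //
      pt.2 ^ 2 + pt.2 = pt.1 ^ 3 - pt.1 ^ 2 - 10 * pt.1 - 20} := by
    rw [← X₀eleven.natCard_point (R := ZMod p),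
      ← X₀eleven.addOrderOf_torsionPoint (F := ZMod p)]
    exact addOrderOf_dvd_natCard _
  omega

/-- For the elliptic curve `X₀(11) : y² + y = x³ - x² - 10x - 20`
and every prime `p ≠ 11` with `p` not congruent to `1` or `4` mod `5` (i.e. `p`
inert or ramified in `ℚ(√5)`), one has `#E(F_p) ≠ p + 1`; that is, no such
prime is supersingular in the sense of having trace of Frobenius zero. -/
theorem stmt11 (p : ℕ) [Fact p.Prime] (hp : p ≠ 11)
    (h1 : p % 5 ≠ 1) (h4 : p % 5 ≠ 4) :
    (1 + Nat.card {pt : ZMod p × ZMod p //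
      pt.2 ^ 2 + pt.2 = pt.1 ^ 3 - pt.1 ^ 2 - 10 * pt.1 - 20}) ≠ p + 1 :=
  stmt11_general p hp h4
end

section
/- Let (D,q) be a good pair with deg D = 3, let N := #{(x,y) ∈ F_q × F_q : y² = D(x)}, and suppose a := q − N is nonzero. Then for every t ∈ ℝ: every complex zero of x ↦ Ξ_t(x, χ_D) is real if and only if t ≥ log(|a| / (2√q)). In particular, the De Bruijn–Newman constant of D equals log(|a| / (2√q)). -/
open Polynomial

noncomputable section

variable {F : Type} [Field F] [Fintype F]

/-- Kronecker symbol of `D` at a monic irreducible `g`: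
`0` if `g ∣ D`, `1` if `D` is a nonzero square mod `g`, `-1` otherwise. -/
def kron (D g : F[X]) : ℤ := by
  classical exact
    if g ∣ D then 0 else if ∃ h : F[X], g ∣ (h ^ 2 - D) then 1 else -1

/-- `χ_D(f)`: the Kronecker symbol extended multiplicatively over the monic
irreducible factors of `f`, counted with multiplicity; `χ_D(1) = 1`.
(Each irreducible factor is rescaled to be monic.) -/
def chi (D f : F[X]) : ℤ :=
  ((UniqueFactorizationMonoid.factors f).map
    (fun g => kron D (C (g.leadingCoeff)⁻¹ * g))).prod

/-- `c_n(D) = Σ_{f monic, deg f = n} χ_D(f)`; monic polynomials of degree `n`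
are parametrized by their lower-order coefficients. -/
def lCoeff (D : F[X]) (n : ℕ) : ℤ :=
  ∑ v : Fin n → F, chi D (X ^ n + ∑ i : Fin n, C (v i) * X ^ (i : ℕ))

/-- The deformed `L`-function `Ξ_t(x, χ_D)`, with `g = (deg D - 1)/2`. -/
def Xi (D : F[X]) (t : ℝ) (x : ℂ) : ℂ :=
  (lCoeff D ((D.natDegree - 1) / 2) : ℂ) +
    ∑ n ∈ Finset.Icc 1 ((D.natDegree - 1) / 2),
      (lCoeff D ((D.natDegree - 1) / 2 - n) : ℂ) *
        ((Real.sqrt (Fintype.card F) ^ n * Real.exp (t * n ^ 2) : ℝ) : ℂ) *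
        (Complex.exp (n * Complex.I * x) + Complex.exp (-(n * Complex.I * x)))

/-- `(D, q)` is a good pair: `q` odd, `D` monic, squarefree, of odd degree `≥ 3`. -/
def GoodPair (D : F[X]) : Prop :=
  Odd (Fintype.card F) ∧ D.Monic ∧ Squarefree D ∧ Odd D.natDegree ∧ 3 ≤ D.natDegree

end

/-!
For `deg D = 3` the genus is `1`, so `Ξ_t(x) = c₁ + 2 √q e^t cos x` with `c₀ = 1`. Counting
square roots through the quadratic character gives `N = q + Σ_x χ(D(x)) = q + c₁`, i.e. `c₁ = -a`.
Hence the zeros of `Ξ_t` are the solutions of `cos x = a / (2 √q e^t)`, and these are all real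
exactly when the right-hand side lies in `[-1, 1]`: a real `c` with `|c| > 1` is hit by `cos` only
off the real axis, while a real value of `cos z` with `im z ≠ 0` forces `sin (re z) = 0`, whence
`|cos z| = cosh (im z) > 1`.
-/

namespace Complex

theorem im_eq_zero_of_cos_eq_ofReal {z : ℂ} {c : ℝ} (hc : |c| ≤ 1) (h : cos z = c) :
    z.im = 0 := by
  by_contra hy
  have hdecomp := cos_eq z
  have him : Real.sin z.re * Real.sinh z.im = 0 := by
    simpa [h, cos_ofReal_re, sin_ofReal_re, cosh_ofReal_re, sinh_ofReal_re] using
      congrArg im hdecomp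
  have hre : c = Real.cos z.re * Real.cosh z.im := by
    simpa [h, cos_ofReal_re, sin_ofReal_re, cosh_ofReal_re, sinh_ofReal_re] using
      congrArg re hdecomp
  have hsin : Real.sin z.re = 0 :=
    (mul_eq_zero.mp him).resolve_right (Real.sinh_ne_zero.mpr hy)
  have hcos : Real.cos z.re ^ 2 = 1 := by
    nlinarith [Real.sin_sq_add_cos_sq z.re]
  have hcosh : 1 < Real.cosh z.im := Real.one_lt_cosh.mpr hy
  have : c ^ 2 = Real.cosh z.im ^ 2 := by rw [hre, mul_pow, hcos, one_mul]
  nlinarith [abs_le.mp hc]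

theorem forall_cos_eq_ofReal_im_eq_zero_iff (c : ℝ) :
    (∀ z : ℂ, cos z = c → z.im = 0) ↔ |c| ≤ 1 := by
  refine ⟨fun h => ?_, fun hc z => im_eq_zero_of_cos_eq_ofReal hc⟩
  obtain ⟨z, hz⟩ := cos_surjective (c : ℂ)
  have hz_real : z = (z.re : ℂ) := ext rfl (by simp [h z hz])
  rw [hz_real, ← ofReal_cos, ofReal_inj] at hz
  exact hz ▸ Real.abs_cos_le_one z.re

end Complex

section

variable {F : Type} [Field F]

theorem chi_of_irreducible_of_monic (D : F[X]) {f : F[X]} (hf : Irreducible f)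
    (hm : f.Monic) : chi D f = kron D f := by
  obtain ⟨p, hfp, hfac⟩ := prime_factors_irreducible hf
    ⟨fun b hb => UniqueFactorizationMonoid.prime_of_factor b hb,
     UniqueFactorizationMonoid.factors_prod hf.ne_zero⟩
  rw [chi, hfac, Multiset.map_singleton, Multiset.prod_singleton]
  obtain ⟨u, rfl⟩ := hfp
  obtain ⟨r, hr, hCr⟩ := Polynomial.isUnit_iff.mp u.isUnit
  rw [← hCr, leadingCoeff_mul, hm.leadingCoeff, one_mul, leadingCoeff_C, mul_comm,
    mul_assoc, ← C_mul, mul_inv_cancel₀ hr.ne_zero, C_1, mul_one]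

theorem kron_X_sub_C [Fintype F] [DecidableEq F] (D : F[X]) (x : F) :
    kron D (X - C x) = quadraticChar F (D.eval x) := by
  have hsq : (∃ h : F[X], X - C x ∣ h ^ 2 - D) ↔ IsSquare (D.eval x) := by
    simp only [dvd_iff_isRoot, IsRoot, eval_sub, eval_pow, sub_eq_zero]
    constructor
    · rintro ⟨h, hh⟩
      exact ⟨h.eval x, by rw [← hh, sq]⟩
    · rintro ⟨y, hy⟩
      exact ⟨C y, by rw [eval_C, hy, sq]⟩
  rw [kron]
  simp only [hsq]
  simp only [quadraticChar_apply, quadraticCharFun, dvd_iff_isRoot, IsRoot]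

theorem lCoeff_zero [Fintype F] (D : F[X]) : lCoeff D 0 = 1 := by
  simp [lCoeff, chi, UniqueFactorizationMonoid.factors_one]

theorem lCoeff_one [Fintype F] [DecidableEq F] (D : F[X]) :
    lCoeff D 1 = ∑ x : F, quadraticChar F (D.eval x) := by
  have hlin (v : Fin 1 → F) : X ^ 1 + ∑ i : Fin 1, C (v i) * X ^ (i : ℕ) = X - C (-v 0) := by
    simp [sub_neg_eq_add]
  simp only [lCoeff, hlin,
    chi_of_irreducible_of_monic D (irreducible_X_sub_C _) (monic_X_sub_C _), kron_X_sub_C]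
  exact Fintype.sum_equiv ((Equiv.funUnique (Fin 1) F).trans (Equiv.neg F)) _ _ fun _ => rfl

theorem natCard_sq_eq_eq_sum_quadraticChar [Fintype F] [DecidableEq F] (hF : ringChar F ≠ 2)
    (f : F → F) :
    (Nat.card {p : F × F // p.2 ^ 2 = f p.1} : ℤ) =
      Fintype.card F + ∑ x : F, quadraticChar F (f x) := by
  rw [Nat.card_congr (Equiv.subtypeProdEquivSigmaSubtype fun x y => y ^ 2 = f x),
    Nat.card_eq_fintype_card, Fintype.card_sigma, Nat.cast_sum, ← Finset.card_univ,
    Finset.card_eq_sum_ones, Nat.cast_sum, ← Finset.sum_add_distrib]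
  refine Finset.sum_congr rfl fun x _ => ?_
  rw [Nat.cast_one, add_comm, ← quadraticChar_card_sqrts hF, Set.toFinset_card]
  rfl

theorem Xi_eq_of_natDegree_eq_three [Fintype F] {D : F[X]} (hdeg : D.natDegree = 3) (t : ℝ)
    (x : ℂ) :
    Xi D t x =
      lCoeff D 1 + (Real.sqrt (Fintype.card F) * Real.exp t : ℝ) * (2 * Complex.cos x) := by
  rw [Xi, hdeg, show (3 - 1) / 2 = 1 from rfl, Finset.Icc_self, Finset.sum_singleton,
    Nat.sub_self, lCoeff_zero, Complex.cos]
  push_cast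
  ring_nf

end

/-- For a good pair `(D, q)` with `deg D = 3`,
`N = #{(x,y) ∈ F_q² : y² = D(x)}` and `a = q - N ≠ 0`: for every `t ∈ ℝ`, all
zeros of `Ξ_t(·, χ_D)` are real iff `t ≥ log(|a| / (2√q))`. In particular the
De Bruijn–Newman constant of `D` equals `log(|a| / (2√q))`. -/
theorem stmt18 (F : Type) [Field F] [Fintype F] (D : F[X]) (hD : GoodPair D)
    (hdeg : D.natDegree = 3) (a : ℤ)
    (haN : a = (Fintype.card F : ℤ)
        - (Nat.card {pt : F × F // pt.2 ^ 2 = D.eval pt.1} : ℤ))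
    (ha : a ≠ 0) (t : ℝ) :
    (∀ x : ℂ, Xi D t x = 0 → x.im = 0) ↔
      Real.log (|a| / (2 * Real.sqrt (Fintype.card F))) ≤ t := by
  classical
  have hF : ringChar F ≠ 2 := by
    have := Nat.odd_iff.mp hD.1
    rw [Ne, FiniteField.even_card_iff_char_two]
    omega
  have hc1 : lCoeff D 1 = -a := by
    rw [haN, natCard_sq_eq_eq_sum_quadraticChar hF (fun x => D.eval x), lCoeff_one]; ring
  obtain ⟨r, hr_eq⟩ : ∃ r, Real.sqrt (Fintype.card F) * Real.exp t = r := ⟨_, rfl⟩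
  have hr : 0 < 2 * r := by rw [← hr_eq]; positivity
  have hzero (x : ℂ) : Xi D t x = 0 ↔ Complex.cos x = ((a / (2 * r) : ℝ) : ℂ) := by
    have hne : ((2 * r : ℝ) : ℂ) ≠ 0 := by exact_mod_cast hr.ne'
    rw [Xi_eq_of_natDegree_eq_three hdeg, hc1, hr_eq, Complex.ofReal_div, eq_div_iff hne]
    push_cast
    constructor <;> intro h <;> linear_combination h
  simp_rw [hzero, Complex.forall_cos_eq_ofReal_im_eq_zero_iff, abs_div, abs_of_pos hr,
    div_le_one hr]
  rw [Real.log_le_iff_le_exp (by positivity), div_le_iff₀ (by positivity), ← hr_eq,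
    Int.cast_abs]
  ring_nf
end
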